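/- arXiv:2002.05345 — 9 statements merged into one kernel-verified Lean document; each statement's English description precedes it below -/
import Mathlib

section
/- Let A be a unital associative algebra over a field k and r,s nonzero scalars. The linear map R: A⊗A → A⊗A defined by R(a⊗b) = s·ab⊗1 + r·1⊗ab − s·a⊗b satisfies the braid equation R¹²∘R²³∘R¹² = R²³∘R¹²∘R²³. -/
open TensorProduct LinearMap

noncomputable def R12 (k : Type*) [Field k] (V : Type*) [AddCommGroup V] [Module k V]
    (R : V ⊗[k] V →ₗ[k] V ⊗[k] V) :
    V ⊗[k] (V ⊗[k] V) →ₗ[k] V ⊗[k] (V ⊗[k] V) :=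
  (TensorProduct.assoc k V V V).toLinearMap ∘ₗ (rTensor V R) ∘ₗ
    (TensorProduct.assoc k V V V).symm.toLinearMap

noncomputable def R23 (k : Type*) [Field k] (V : Type*) [AddCommGroup V] [Module k V]
    (R : V ⊗[k] V →ₗ[k] V ⊗[k] V) :
    V ⊗[k] (V ⊗[k] V) →ₗ[k] V ⊗[k] (V ⊗[k] V) :=
  lTensor V R

theorem stmt0 (k : Type*) [Field k] (A : Type*) [Ring A] [Algebra k A]
    (r s : k) (hr : r ≠ 0) (hs : s ≠ 0)
    (R : A ⊗[k] A →ₗ[k] A ⊗[k] A)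
    (hR : ∀ a b : A, R (a ⊗ₜ[k] b) =
      s • ((a * b) ⊗ₜ[k] (1 : A)) + r • ((1 : A) ⊗ₜ[k] (a * b)) - s • (a ⊗ₜ[k] b)) :
    R12 k A R ∘ₗ R23 k A R ∘ₗ R12 k A R = R23 k A R ∘ₗ R12 k A R ∘ₗ R23 k A R := by
  ext a b c
  simp only [R12, R23, AlgebraTensorModule.curry_apply, curry_apply, coe_restrictScalars,
    comp_apply, LinearEquiv.coe_coe, assoc_symm_tmul, rTensor_tmul, lTensor_tmul, assoc_tmul,
    hR, sub_tmul, add_tmul, tmul_sub, tmul_add, smul_tmul', tmul_smul, map_add, map_sub, map_smul,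
    mul_one, one_mul, mul_assoc, smul_mul_assoc, mul_smul_comm, smul_smul]
  simp only [smul_tmul, tmul_smul, smul_smul]
  module
end

section
/- Let A be a unital associative algebra over a field k and r,s nonzero scalars, and R(a⊗b) = s·ab⊗1 + r·1⊗ab − s·a⊗b. Then R is invertible with inverse R⁻¹(a⊗b) = (1/r)·ab⊗1 + (1/s)·1⊗ab − (1/s)·a⊗b. -/
open TensorProduct LinearMap

theorem stmt1 (k : Type*) [Field k] (A : Type*) [Ring A] [Algebra k A]
    (r s : k) (hr : r ≠ 0) (hs : s ≠ 0)
    (R Rinv : A ⊗[k] A →ₗ[k] A ⊗[k] A)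
    (hR : ∀ a b : A, R (a ⊗ₜ[k] b) =
      s • ((a * b) ⊗ₜ[k] (1 : A)) + r • ((1 : A) ⊗ₜ[k] (a * b)) - s • (a ⊗ₜ[k] b))
    (hRinv : ∀ a b : A, Rinv (a ⊗ₜ[k] b) =
      r⁻¹ • ((a * b) ⊗ₜ[k] (1 : A)) + s⁻¹ • ((1 : A) ⊗ₜ[k] (a * b)) - s⁻¹ • (a ⊗ₜ[k] b)) :
    Rinv ∘ₗ R = LinearMap.id ∧ R ∘ₗ Rinv = LinearMap.id := by
  constructor <;>
  · apply TensorProduct.ext'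
    intro a b
    simp only [LinearMap.comp_apply, LinearMap.id_apply, hR, hRinv, map_add, map_sub,
      map_smul, mul_one, one_mul, smul_add, smul_sub, smul_smul,
      mul_inv_cancel₀ hr, mul_inv_cancel₀ hs, inv_mul_cancel₀ hr, inv_mul_cancel₀ hs, one_smul]
    abel
end

section
/- If a linear map R: V⊗V → V⊗V satisfies R¹²∘R²³ = R¹³∘R¹² and R¹³∘R¹² = R²³∘R¹³ and additionally R²³∘R¹² = R¹²∘R¹³, then R satisfies both the braid equation R¹²∘R²³∘R¹² = R²³∘R¹²∘R²³ and the quantum Yang-Baxter equation R¹²∘R¹³∘R²³ = R²³∘R¹³∘R¹². -/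
open TensorProduct LinearMap

noncomputable def R13 (k : Type*) [Field k] (V : Type*) [AddCommGroup V] [Module k V]
    (R : V ⊗[k] V →ₗ[k] V ⊗[k] V) :
    V ⊗[k] (V ⊗[k] V) →ₗ[k] V ⊗[k] (V ⊗[k] V) :=
  (lTensor V (TensorProduct.comm k V V).toLinearMap) ∘ₗ R12 k V R ∘ₗ
    (lTensor V (TensorProduct.comm k V V).toLinearMap)

theorem stmt5 (k : Type*) [Field k] (V : Type*) [AddCommGroup V] [Module k V]
    (R : V ⊗[k] V →ₗ[k] V ⊗[k] V)
    (h1 : R12 k V R ∘ₗ R23 k V R = R13 k V R ∘ₗ R12 k V R)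
    (h2 : R13 k V R ∘ₗ R12 k V R = R23 k V R ∘ₗ R13 k V R)
    (h3 : R23 k V R ∘ₗ R12 k V R = R12 k V R ∘ₗ R13 k V R) :
    (R12 k V R ∘ₗ R23 k V R ∘ₗ R12 k V R = R23 k V R ∘ₗ R12 k V R ∘ₗ R23 k V R) ∧
    (R12 k V R ∘ₗ R13 k V R ∘ₗ R23 k V R = R23 k V R ∘ₗ R13 k V R ∘ₗ R12 k V R) := by
  set a := R12 k V R
  set b := R23 k V R
  set c := R13 k V R
  have braid : a ∘ₗ b ∘ₗ a = b ∘ₗ a ∘ₗ b := by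
    calc a ∘ₗ b ∘ₗ a = (a ∘ₗ b) ∘ₗ a := by rw [comp_assoc]
    _ = (c ∘ₗ a) ∘ₗ a := by rw [h1]
    _ = (b ∘ₗ c) ∘ₗ a := by rw [h2]
    _ = b ∘ₗ c ∘ₗ a := by rw [comp_assoc]
    _ = b ∘ₗ a ∘ₗ b := by rw [← h1]
  refine ⟨braid, ?_⟩
  calc a ∘ₗ c ∘ₗ b = (a ∘ₗ c) ∘ₗ b := by rw [comp_assoc]
  _ = (b ∘ₗ a) ∘ₗ b := by rw [← h3]
  _ = b ∘ₗ a ∘ₗ b := by rw [comp_assoc]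
  _ = a ∘ₗ b ∘ₗ a := braid.symm
  _ = (a ∘ₗ b) ∘ₗ a := by rw [comp_assoc]
  _ = (c ∘ₗ a) ∘ₗ a := by rw [h1]
  _ = (b ∘ₗ c) ∘ₗ a := by rw [h2]
  _ = b ∘ₗ c ∘ₗ a := by rw [comp_assoc]
end

section
/- Let (V,η) be a UJLA structure and α, β ∈ k. Then (V, η') with η'(a⊗b) = α·ab + β·ba is again a UJLA structure. -/
/-- A UJLA structure: a bilinear multiplication satisfying the unifying identity
and the four Jordan-type identities. -/
def IsUJLA (k : Type*) [Field k] (V : Type*) [AddCommGroup V] [Module k V]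
    (m : V →ₗ[k] V →ₗ[k] V) : Prop :=
  (∀ a b c : V, m (m a b) c + m (m b c) a + m (m c a) b =
      m a (m b c) + m b (m c a) + m c (m a b)) ∧
  (∀ a b : V, m (m (m a a) b) a = m (m a a) (m b a)) ∧
  (∀ a b : V, m (m a b) (m a a) = m a (m b (m a a))) ∧
  (∀ a b : V, m (m b (m a a)) a = m (m b a) (m a a)) ∧
  (∀ a b : V, m (m a a) (m a b) = m a (m (m a a) b))

theorem stmt11 (k : Type*) [Field k] (V : Type*) [AddCommGroup V] [Module k V]
    (m : V →ₗ[k] V →ₗ[k] V) (hm : IsUJLA k V m) (α β : k) :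
    IsUJLA k V (α • m + β • m.flip) := by
  obtain ⟨h1, h2, h3, h4, h5⟩ := hm
  refine ⟨?_, ?_, ?_, ?_, ?_⟩ <;> intros a b <;>
    try intro c
  all_goals
    simp only [LinearMap.add_apply, LinearMap.smul_apply, LinearMap.flip_apply,
      map_add, map_smul, LinearMap.add_apply, LinearMap.smul_apply]
  · linear_combination (norm := module) (α^2 : k) • h1 a b c - (β^2 : k) • h1 a c b +
      (α*β : k) • h1 b a c - (α*β : k) • h1 a b c
  · linear_combination (norm := module) ((α+β)*α^2 : k) • h2 a b +
      ((α+β)*α*β : k) • h4 a b - ((α+β)*α*β : k) • h5 a b - ((α+β)*β^2 : k) • h3 a b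
  · linear_combination (norm := module) ((α+β)*α^2 : k) • h3 a b -
      ((α+β)*β^2 : k) • h2 a b - ((α+β)*α*β : k) • h4 a b + ((α+β)*α*β : k) • h5 a b
  · linear_combination (norm := module) ((α+β)*α^2 : k) • h4 a b -
      ((α+β)*β^2 : k) • h5 a b + ((α+β)*α*β : k) • h2 a b - ((α+β)*α*β : k) • h3 a b
  · linear_combination (norm := module) ((α+β)*α^2 : k) • h5 a b -
      ((α+β)*β^2 : k) • h4 a b - ((α+β)*α*β : k) • h2 a b + ((α+β)*α*β : k) • h3 a b
end

section
/- Let (V,η) be a UJLA structure. Then (V, η') with η'(a⊗b) = ab − ba is a Lie algebra, i.e., the bracket [a,b] = ab − ba is antisymmetric and satisfies the Jacobi identity. -/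
theorem stmt12 (k : Type*) [Field k] (V : Type*) [AddCommGroup V] [Module k V]
    (m : V →ₗ[k] V →ₗ[k] V) (hm : IsUJLA k V m) :
    (∀ a b : V, m a b - m b a = -(m b a - m a b)) ∧
    (∀ a b c : V,
      ((m (m a b - m b a) c - m c (m a b - m b a)) +
       (m (m b c - m c b) a - m a (m b c - m c b))) +
       (m (m c a - m a c) b - m b (m c a - m a c)) = 0) := by
  refine ⟨fun a b => by abel, fun a b c => ?_⟩
  have h1 := hm.1 a b c
  have h2 := hm.1 a c b
  simp only [map_sub, LinearMap.sub_apply]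
  linear_combination (norm := abel) h1 - h2
end

section
/- Let (V,η) be a UJLA structure over a field of characteristic not 2. Then (V, η') with η'(a⊗b) = (1/2)(ab + ba) is a Jordan algebra: the product is commutative and satisfies the Jordan identity (a∘b)∘(a∘a) = a∘(b∘(a∘a)). -/
theorem stmt13 (k : Type*) [Field k] (h2 : (2 : k) ≠ 0)
    (V : Type*) [AddCommGroup V] [Module k V]
    (m : V →ₗ[k] V →ₗ[k] V) (hm : IsUJLA k V m) :
    (∀ a b : V, (2 : k)⁻¹ • (m a b + m b a) = (2 : k)⁻¹ • (m b a + m a b)) ∧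
    (∀ a b : V,
      -- (a∘b)∘(a∘a) = a∘(b∘(a∘a)) for a∘b = (1/2)(ab+ba)
      (let J : V → V → V := fun x y => (2 : k)⁻¹ • (m x y + m y x);
       J (J a b) (J a a) = J a (J b (J a a)))) := by
  obtain ⟨h1, hb, hc, hd, he⟩ := hm
  refine ⟨fun a b => by rw [add_comm], fun a b => ?_⟩
  dsimp only
  have haa : (2 : k)⁻¹ • (m a a + m a a) = m a a := by
    rw [← two_smul k, smul_smul, inv_mul_cancel₀ h2, one_smul]
  rw [haa]
  simp only [map_smul, map_add, LinearMap.smul_apply, LinearMap.add_apply, smul_add]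
  rw [hc a b, he a b, ← hd a b, ← hb a b]
  module
end

section
/- If (A,θ) is a (non-unital) associative algebra and α, β ∈ k, then A with the multiplication θ'(a⊗b) = α·ab + β·ba is a UJLA structure. -/
theorem stmt14 (k : Type*) [Field k] (A : Type*) [NonUnitalRing A] [Module k A]
    [SMulCommClass k A A] [IsScalarTower k A A] (α β : k) :
    IsUJLA k A (α • LinearMap.mul k A + β • (LinearMap.mul k A).flip) := by
  refine ⟨fun a b c => ?_, fun a b => ?_, fun a b => ?_, fun a b => ?_, fun a b => ?_⟩ <;>
  · simp only [LinearMap.add_apply, LinearMap.smul_apply, LinearMap.flip_apply,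
      LinearMap.mul_apply', smul_add, mul_add, add_mul, smul_smul, mul_smul_comm,
      smul_mul_assoc, mul_assoc]
    module
end

section
/- Let (V,η) be a UJLA structure and fix b ∈ V. Then the map D(x) = bx − xb satisfies D(a²a) = D(a²)a + a²D(a) for all a ∈ V. -/
theorem stmt15 (k : Type*) [Field k] (V : Type*) [AddCommGroup V] [Module k V]
    (m : V →ₗ[k] V →ₗ[k] V) (hm : IsUJLA k V m) (b : V) :
    ∀ a : V,
      (fun x => m b x - m x b) (m (m a a) a) =
        m ((fun x => m b x - m x b) (m a a)) a +
        m (m a a) ((fun x => m b x - m x b) a) := by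
  intro a
  obtain ⟨h1, h2, h3, h4, h5⟩ := hm
  simp only [map_sub, LinearMap.sub_apply]
  have u := h1 b (m a a) a
  rw [h3 a b] at u
  have u' := add_right_cancel u
  have key : m b (m (m a a) a) - m (m (m a a) a) b
      = m (m b (m a a)) a - m (m a a) (m a b) :=
    sub_eq_sub_iff_add_eq_add.mpr u'.symm
  rw [h2 a b, key]
  abel
end

section
/- If three circles of equal radius r in the Euclidean plane pass through a common point O, and A, B, C are the other pairwise intersection points of the three circles, then there exists a circle of the same radius r passing through A, B and C (Tzitzeica–Johnson three coins theorem). -/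
lemma second_inter (r : ℝ) (c₁ c₂ O A : EuclideanSpace ℝ (Fin 2))
    (hc : c₁ ≠ c₂) (hO1 : dist c₁ O = r) (hO2 : dist c₂ O = r)
    (hA1 : dist c₁ A = r) (hA2 : dist c₂ A = r) (hA : A ≠ O) :
    A = c₁ + c₂ - O := by
  by_cases hdeg : O = c₁ + c₂ - O
  · exfalso
    apply hA
    have hc₂ : c₂ = O + O - c₁ := by
      have h := hdeg
      rw [eq_sub_iff_add_eq] at h
      rw [h]; abel
    set u := A - O with hu
    set v := c₁ - O with hv
    have h1 : ‖u - v‖ = r := by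
      rw [hu, hv]
      rw [show A - O - (c₁ - O) = A - c₁ by abel]
      rw [← dist_eq_norm, dist_comm]; exact hA1
    have h2 : ‖u + v‖ = r := by
      rw [hu, hv]
      rw [show A - O + (c₁ - O) = A - (O + O - c₁) by abel, ← hc₂]
      rw [← dist_eq_norm, dist_comm]; exact hA2
    have h3 : ‖v‖ = r := by
      rw [hv, ← dist_eq_norm]
      exact hO1
    have hpar := parallelogram_law_with_norm ℝ u v
    rw [h1, h2, h3] at hpar
    have hu0 : ‖u‖ = 0 := by nlinarith [norm_nonneg u]
    have : u = 0 := norm_eq_zero.mp hu0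
    rw [hu, sub_eq_zero] at this
    exact this
  · have hP1 : dist c₁ (c₁ + c₂ - O) = r := by
      rw [dist_eq_norm, show c₁ - (c₁ + c₂ - O) = O - c₂ by abel, ← dist_eq_norm,
        dist_comm]; exact hO2
    have hP2 : dist c₂ (c₁ + c₂ - O) = r := by
      rw [dist_eq_norm, show c₂ - (c₁ + c₂ - O) = O - c₁ by abel, ← dist_eq_norm,
        dist_comm]; exact hO1
    have hd : Module.finrank ℝ (EuclideanSpace ℝ (Fin 2)) = 2 := by simp
    have hO1' : dist O c₁ = r := by rw [dist_comm]; exact hO1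
    have hO2' : dist O c₂ = r := by rw [dist_comm]; exact hO2
    have hA1' : dist A c₁ = r := by rw [dist_comm]; exact hA1
    have hA2' : dist A c₂ = r := by rw [dist_comm]; exact hA2
    have hP1' : dist (c₁ + c₂ - O) c₁ = r := by rw [dist_comm]; exact hP1
    have hP2' : dist (c₁ + c₂ - O) c₂ = r := by rw [dist_comm]; exact hP2
    have := EuclideanGeometry.eq_of_dist_eq_of_dist_eq_of_finrank_eq_two hd hc
      (p₁ := O) (p₂ := c₁ + c₂ - O) (p := A) hdeg
      hO1' hP1' hA1' hO2' hP2' hA2' 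
    rcases this with h | h
    · exact absurd h hA
    · exact h

/-- Tzitzeica–Johnson three coins theorem. -/
theorem stmt19 (r : ℝ) (hr : 0 < r)
    (O A B C c₁ c₂ c₃ : EuclideanSpace ℝ (Fin 2))
    (hc12 : c₁ ≠ c₂) (hc23 : c₂ ≠ c₃) (hc13 : c₁ ≠ c₃)
    (hO1 : dist c₁ O = r) (hO2 : dist c₂ O = r) (hO3 : dist c₃ O = r)
    (hA1 : dist c₁ A = r) (hA2 : dist c₂ A = r) (hA : A ≠ O)
    (hB2 : dist c₂ B = r) (hB3 : dist c₃ B = r) (hB : B ≠ O)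
    (hC1 : dist c₁ C = r) (hC3 : dist c₃ C = r) (hC : C ≠ O) :
    ∃ c : EuclideanSpace ℝ (Fin 2), dist c A = r ∧ dist c B = r ∧ dist c C = r := by
  have hAeq := second_inter r c₁ c₂ O A hc12 hO1 hO2 hA1 hA2 hA
  have hBeq := second_inter r c₂ c₃ O B hc23 hO2 hO3 hB2 hB3 hB
  have hCeq := second_inter r c₁ c₃ O C hc13 hO1 hO3 hC1 hC3 hC
  refine ⟨c₁ + c₂ + c₃ - O - O, ?_, ?_, ?_⟩
  · rw [hAeq, dist_eq_norm,
      show c₁ + c₂ + c₃ - O - O - (c₁ + c₂ - O) = c₃ - O by abel, ← dist_eq_norm]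
    exact hO3
  · rw [hBeq, dist_eq_norm,
      show c₁ + c₂ + c₃ - O - O - (c₂ + c₃ - O) = c₁ - O by abel, ← dist_eq_norm]
    exact hO1
  · rw [hCeq, dist_eq_norm,
      show c₁ + c₂ + c₃ - O - O - (c₁ + c₃ - O) = c₂ - O by abel, ← dist_eq_norm]
    exact hO2
end
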